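/- arXiv:math/0210471 — 4 statements merged into one kernel-verified Lean document; each statement's English description precedes it below -/
import Mathlib

section
/- If a finitely generated group G contains a free submonoid on 2 generators, then G has exponential word growth: for any finite generating set S, the limit of the n-th roots of the sizes of balls of radius n is strictly greater than 1. -/
/-!
The ball sizes `|B(n)|` are submultiplicative, so by Fekete's lemma `|B(n)|^(1/n)` converges.
If the free generators `a, b` have word length at most `C`, the `2^n` distinct positive words of
length `n` in `a, b` lie in `B(C n)`, and `|B(C n)| ≤ |B(n)|^C`; hence `|B(n)|^(1/n) ≥ 2^(1/C) > 1`
for every `n ≥ 1`, and the limit inherits this bound.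
-/

/-- The ball of radius `n` in a group with respect to a generating set `S`:
elements expressible as products of at most `n` generators or inverses of generators. -/
def wordBall {G : Type*} [Group G] (S : Set G) (n : ℕ) : Set G :=
  {g | ∃ l : List G, (∀ x ∈ l, x ∈ S ∨ x⁻¹ ∈ S) ∧ l.length ≤ n ∧ l.prod = g}

open Filter Pointwise Topology

section WordBall

variable {G : Type*} [Group G] {S : Set G}

lemma one_mem_wordBall (n : ℕ) : (1 : G) ∈ wordBall S n :=
  ⟨[], by simp, n.zero_le, rfl⟩

lemma wordBall_zero : wordBall S 0 = {1} := by
  refine Set.Subset.antisymm ?_ (Set.singleton_subset_iff.2 (one_mem_wordBall 0))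
  rintro g ⟨l, -, hl, rfl⟩
  simp [List.length_eq_zero_iff.1 (Nat.le_zero.1 hl)]

lemma wordBall_one_subset : wordBall S 1 ⊆ insert 1 (S ∪ S⁻¹) := by
  rintro g ⟨l, hS, hl, rfl⟩
  match l, hl with
  | [], _ => exact Set.mem_insert _ _
  | [x], _ => exact Or.inr (by simpa using hS x (List.mem_singleton_self x))

lemma wordBall_mono {m n : ℕ} (h : m ≤ n) : wordBall S m ⊆ wordBall S n := by
  rintro g ⟨l, hS, hl, rfl⟩
  exact ⟨l, hS, hl.trans h, rfl⟩

lemma mul_mem_wordBall {m n : ℕ} {g h : G} (hg : g ∈ wordBall S m) (hh : h ∈ wordBall S n) :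
    g * h ∈ wordBall S (m + n) := by
  obtain ⟨l₁, hS₁, hl₁, rfl⟩ := hg
  obtain ⟨l₂, hS₂, hl₂, rfl⟩ := hh
  refine ⟨l₁ ++ l₂, fun x hx => ?_, by simp only [List.length_append]; omega, List.prod_append⟩
  rcases List.mem_append.1 hx with hx | hx
  exacts [hS₁ x hx, hS₂ x hx]

lemma wordBall_add_subset (m n : ℕ) : wordBall S (m + n) ⊆ wordBall S m * wordBall S n := by
  rintro g ⟨l, hS, hl, rfl⟩
  refine ⟨(l.take m).prod, ⟨l.take m, fun x hx => hS x (List.mem_of_mem_take hx),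
      by simp, rfl⟩,
    (l.drop m).prod, ⟨l.drop m, fun x hx => hS x (List.mem_of_mem_drop hx),
      by simp; omega, rfl⟩, ?_⟩
  exact (List.prod_append ..).symm.trans (congrArg _ (List.take_append_drop m l))

lemma exists_mem_wordBall_of_mem_closure {g : G} (hg : g ∈ Subgroup.closure S) :
    ∃ n, g ∈ wordBall S n := by
  rw [← Subgroup.mem_toSubmonoid, Subgroup.closure_toSubmonoid] at hg
  obtain ⟨l, hS, rfl⟩ := Submonoid.exists_list_of_mem_closure hg
  exact ⟨l.length, l, fun x hx => by simpa using hS x hx, le_rfl, rfl⟩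

lemma exists_pos_forall_mem_wordBall {ι : Type*} [Finite ι] (hS : Subgroup.closure S = ⊤)
    (g : ι → G) : ∃ C, 0 < C ∧ ∀ i, g i ∈ wordBall S C := by
  choose k hk using fun i => exists_mem_wordBall_of_mem_closure (hS ▸ Subgroup.mem_top (g i))
  obtain ⟨C, hC⟩ := (Set.finite_range k).bddAbove
  exact ⟨C + 1, C.succ_pos, fun i =>
    wordBall_mono ((hC (Set.mem_range_self i)).trans C.le_succ) (hk i)⟩

variable (hS : S.Finite)
include hS

lemma wordBall_finite (n : ℕ) : (wordBall S n).Finite := by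
  induction n with
  | zero => simp [wordBall_zero]
  | succ n ih =>
    rw [add_comm]
    exact ((((hS.union hS.inv).insert 1).subset wordBall_one_subset).mul ih).subset
      (wordBall_add_subset 1 n)

lemma card_wordBall_add_le (m n : ℕ) :
    Nat.card (wordBall S (m + n)) ≤ Nat.card (wordBall S m) * Nat.card (wordBall S n) :=
  (Nat.card_mono ((wordBall_finite hS m).mul (wordBall_finite hS n))
    (wordBall_add_subset m n)).trans Set.natCard_mul_le

lemma card_wordBall_mul_le (k n : ℕ) :
    Nat.card (wordBall S (k * n)) ≤ Nat.card (wordBall S n) ^ k := by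
  induction k with
  | zero => simp [wordBall_zero]
  | succ k ih =>
    rw [Nat.succ_mul, pow_succ]
    exact (card_wordBall_add_le hS _ _).trans (Nat.mul_le_mul_right _ ih)

lemma one_le_card_wordBall (n : ℕ) : 1 ≤ Nat.card (wordBall S n) :=
  Nat.card_pos_iff.2 ⟨⟨⟨1, one_mem_wordBall n⟩⟩, (wordBall_finite hS n).to_subtype⟩

end WordBall

section FreeMonoid

variable {G : Type*} [Group G] {S : Set G} {α : Type*} {f : FreeMonoid α →* G} {C : ℕ}

lemma map_mem_wordBall_mul_length (hf : ∀ i, f (FreeMonoid.of i) ∈ wordBall S C)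
    (w : FreeMonoid α) : f w ∈ wordBall S (C * w.length) := by
  induction w using FreeMonoid.inductionOn' with
  | one => exact map_one f ▸ one_mem_wordBall _
  | of_mul i w ih =>
    rw [map_mul, FreeMonoid.length_mul, FreeMonoid.length_of, mul_add, mul_one]
    exact mul_mem_wordBall (hf i) ih

lemma card_pow_le_card_wordBall [Fintype α] (hS : S.Finite) (hinj : Function.Injective f)
    (hf : ∀ i, f (FreeMonoid.of i) ∈ wordBall S C) (n : ℕ) :
    Fintype.card α ^ n ≤ Nat.card (wordBall S (C * n)) := by
  have := (wordBall_finite hS (C * n)).to_subtype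
  let word (v : Fin n → α) : wordBall S (C * n) :=
    ⟨f (FreeMonoid.ofList (List.ofFn v)), by
      simpa [FreeMonoid.length] using
        map_mem_wordBall_mul_length hf (FreeMonoid.ofList (List.ofFn v))⟩
  have hword : Function.Injective word := fun v w hvw =>
    List.ofFn_injective (FreeMonoid.ofList.injective (hinj (Subtype.ext_iff.1 hvw)))
  simpa [Nat.card_eq_fintype_card] using Nat.card_le_card_of_injective word hword

end FreeMonoid

lemma exists_tendsto_rpow_one_div_of_submultiplicative {a : ℕ → ℝ} (ha : ∀ n, 1 ≤ a n)
    (hmul : ∀ m n, a (m + n) ≤ a m * a n) :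
    ∃ L, Tendsto (fun n : ℕ => a n ^ (1 / (n : ℝ))) atTop (𝓝 L) := by
  have hpos n : 0 < a n := one_pos.trans_le (ha n)
  have hsub : Subadditive fun n => Real.log (a n) := fun m n => by
    rw [← Real.log_mul (hpos m).ne' (hpos n).ne']
    exact Real.log_le_log (hpos _) (hmul m n)
  have hbdd : BddBelow (Set.range fun n : ℕ => Real.log (a n) / n) :=
    ⟨0, by rintro _ ⟨n, rfl⟩; exact div_nonneg (Real.log_nonneg (ha n)) n.cast_nonneg⟩
  refine ⟨Real.exp hsub.lim,
    ((Real.continuous_exp.tendsto _).comp (hsub.tendsto_lim hbdd)).congr fun n => ?_⟩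
  simp [Real.rpow_def_of_pos (hpos n), div_eq_mul_inv]

lemma rpow_one_div_le_rpow_one_div_of_pow_le_pow {a b : ℝ} (ha : 0 ≤ a) (hb : 0 ≤ b)
    {k n : ℕ} (hk : 0 < k) (hn : 0 < n) (h : b ^ n ≤ a ^ k) :
    b ^ (1 / (k : ℝ)) ≤ a ^ (1 / (n : ℝ)) := by
  have hroot : 0 ≤ 1 / ((n : ℝ) * k) := by positivity
  calc b ^ (1 / (k : ℝ)) = (b ^ n) ^ (1 / ((n : ℝ) * k)) := by
        rw [← Real.rpow_natCast, ← Real.rpow_mul hb]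
        field_simp
    _ ≤ (a ^ k) ^ (1 / ((n : ℝ) * k)) := Real.rpow_le_rpow (pow_nonneg hb n) h hroot
    _ = a ^ (1 / (n : ℝ)) := by
        rw [← Real.rpow_natCast, ← Real.rpow_mul ha]
        field_simp

/-- If a finitely generated group contains a free submonoid on two generators, then it has
exponential word growth with respect to every finite generating set. -/
theorem exponential_growth_of_free_submonoid {G : Type*} [Group G]
    (hfree : ∃ f : FreeMonoid (Fin 2) →* G, Function.Injective f)
    (S : Set G) (hSfin : S.Finite) (hSgen : Subgroup.closure S = ⊤) :
    ∃ L : ℝ, 1 < L ∧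
      Filter.Tendsto (fun n : ℕ => (Nat.card (wordBall S n) : ℝ) ^ (1 / (n : ℝ)))
        Filter.atTop (nhds L) := by
  obtain ⟨f, hf⟩ := hfree
  obtain ⟨C, hC, hgen⟩ := exists_pos_forall_mem_wordBall hSgen fun i => f (FreeMonoid.of i)
  obtain ⟨L, hL⟩ := exists_tendsto_rpow_one_div_of_submultiplicative
    (a := fun n => (Nat.card (wordBall S n) : ℝ))
    (fun n => by exact_mod_cast one_le_card_wordBall hSfin n)
    (fun m n => by exact_mod_cast card_wordBall_add_le hSfin m n)
  have hgrowth n : 2 ^ n ≤ Nat.card (wordBall S n) ^ C := by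
    simpa using (card_pow_le_card_wordBall hSfin hf hgen n).trans (card_wordBall_mul_le hSfin C n)
  have hbound : ∀ n ≥ 1,
      (2 : ℝ) ^ (1 / (C : ℝ)) ≤ (Nat.card (wordBall S n) : ℝ) ^ (1 / (n : ℝ)) :=
    fun n hn => rpow_one_div_le_rpow_one_div_of_pow_le_pow (Nat.cast_nonneg _) zero_le_two hC hn
      (by exact_mod_cast hgrowth n)
  refine ⟨L, ?_, hL⟩
  calc (1 : ℝ) < 2 ^ (1 / (C : ℝ)) := Real.one_lt_rpow one_lt_two (by positivity)
    _ ≤ L := ge_of_tendsto hL (eventually_atTop.2 ⟨1, hbound⟩)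
end

section
/- For each n ∈ ℕ, there are at most 30 reduced words of length n over the alphabet {a,b,c} containing no subword from the set Δ = {aba, bcb, cac, acbacabca, bacbabcab, cbacbcabc}. -/
-- letters `a`, `b`, `c` encoded as `0`, `1`, `2` in `Fin 3`
notation "la" => (0 : Fin 3)
notation "lb" => (1 : Fin 3)
notation "lc" => (2 : Fin 3)

/-- A word is reduced if no two consecutive letters coincide. -/
def IsReducedWord (w : List (Fin 3)) : Prop := w.Chain' (· ≠ ·)

/-- The set `Δ = {aba, bcb, cac, acbacabca, bacbabcab, cbacbcabc}`. -/
def Delta : Set (List (Fin 3)) :=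
  {[la, lb, la], [lb, lc, lb], [lc, la, lc],
   [la, lc, lb, la, lc, la, lb, lc, la],
   [lb, la, lc, lb, la, lb, lc, la, lb],
   [lc, lb, la, lc, lb, lc, la, lb, lc]}

/-!
In `Fin 3` every step of a reduced word is `+1` or `-1`, and the three short words of `Δ` are
exactly the words `y, y + 1, y`, i.e. a `+1` step followed by a `-1` step. So an admissible word
first descends and then ascends: it is `zigzag x i j`, determined by its first letter `x` and the
number `i` of descending steps, the number `j` of ascending ones being fixed by the length. The
three long words of `Δ` are four descending steps followed by four ascending ones, so `i < 4` or
`j < 4`, which leaves at most `3 · 8` nonempty words of each length.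
-/

open Finset

/-- `zigzag x i j` is the word `x, x - 1, …, x - i, x - i + 1, …, x - i + j`. -/
def zigzag : Fin 3 → ℕ → ℕ → List (Fin 3)
  | x, i + 1, j => x :: zigzag (x - 1) i j
  | x, 0, j + 1 => x :: zigzag (x + 1) 0 j
  | x, 0, 0 => [x]

theorem zigzag_eq_cons (x : Fin 3) (i j : ℕ) : ∃ t, zigzag x i j = x :: t := by
  cases i <;> cases j <;> simp [zigzag]

theorem length_zigzag (x : Fin 3) (i j : ℕ) : (zigzag x i j).length = i + j + 1 := by
  induction x, i, j using zigzag.induct <;> simp [zigzag, *, Nat.add_right_comm]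

theorem zigzag_prefix_zigzag_add (x : Fin 3) (i j k : ℕ) :
    zigzag x i j <+: zigzag x i (j + k) := by
  induction i generalizing x with
  | succ i ih => simpa [zigzag] using ih (x - 1)
  | zero =>
    induction j generalizing x with
    | zero =>
      obtain ⟨t, ht⟩ := zigzag_eq_cons x 0 k
      simp [zigzag, ht]
    | succ j ih => simpa [zigzag, Nat.add_right_comm] using ih (x + 1)

theorem exists_zigzag_infix_zigzag_add (x : Fin 3) (i i' j : ℕ) :
    ∃ y, zigzag y i' j <:+: zigzag x (i + i') j := by
  induction i generalizing x with
  | zero => exact ⟨x, by simp⟩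
  | succ i ih =>
    obtain ⟨y, hy⟩ := ih (x - 1)
    rw [Nat.add_right_comm, zigzag]
    exact ⟨y, hy.trans (List.suffix_cons x _).isInfix⟩

theorem exists_zigzag_four_four_infix (x : Fin 3) {i j : ℕ} (hi : 4 ≤ i) (hj : 4 ≤ j) :
    ∃ y, zigzag y 4 4 <:+: zigzag x i j := by
  obtain ⟨i, rfl⟩ := Nat.exists_eq_add_of_le' hi
  obtain ⟨j, rfl⟩ := Nat.exists_eq_add_of_le hj
  obtain ⟨y, hy⟩ := exists_zigzag_infix_zigzag_add x i 4 (4 + j)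
  exact ⟨y, (zigzag_prefix_zigzag_add y 4 4 j).isInfix.trans hy⟩

theorem fin_three_eq_add_one_or_eq_sub_one_of_ne {x y : Fin 3} (h : x ≠ y) :
    y = x + 1 ∨ y = x - 1 := by
  revert x y; decide

theorem eq_zigzag_of_isChain {x : Fin 3} {t : List (Fin 3)} (hred : (x :: t).IsChain (· ≠ ·))
    (havoid : ∀ y, ¬ [y, y + 1, y] <:+: x :: t) : ∃ i j, x :: t = zigzag x i j := by
  induction t generalizing x with
  | nil => exact ⟨0, 0, by simp [zigzag]⟩
  | cons y t ih =>
    rw [List.isChain_cons_cons] at hred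
    obtain ⟨i, j, hij⟩ :=
      ih hred.2 fun z hz => havoid z (hz.trans (List.suffix_cons x _).isInfix)
    rcases fin_three_eq_add_one_or_eq_sub_one_of_ne hred.1 with rfl | rfl
    · cases i with
      | zero => exact ⟨0, j + 1, by rw [hij, zigzag]⟩
      | succ i =>
        obtain ⟨s, hs⟩ := zigzag_eq_cons (x + 1 - 1) i j
        rw [hij, zigzag, hs, add_sub_cancel_right] at havoid
        exact absurd ⟨[], s, rfl⟩ (havoid x)
    · exact ⟨i + 1, j, by rw [hij, zigzag]⟩

theorem up_down_mem_Delta (y : Fin 3) : [y, y + 1, y] ∈ Delta := by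
  fin_cases y <;> simp [Delta]

theorem zigzag_four_four_mem_Delta (y : Fin 3) : zigzag y 4 4 ∈ Delta := by
  fin_cases y <;> simp [Delta, zigzag] <;> decide

theorem eq_zigzag_of_avoids_Delta {x : Fin 3} {t : List (Fin 3)} (hred : IsReducedWord (x :: t))
    (havoid : ∀ d ∈ Delta, ¬ d <:+: x :: t) :
    ∃ i j, (i < 4 ∨ j < 4) ∧ x :: t = zigzag x i j := by
  obtain ⟨i, j, hw⟩ := eq_zigzag_of_isChain hred fun y => havoid _ (up_down_mem_Delta y)
  refine ⟨i, j, ?_, hw⟩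
  by_contra! h
  obtain ⟨y, hy⟩ := exists_zigzag_four_four_infix x h.1 h.2
  exact havoid _ (zigzag_four_four_mem_Delta y) (hw ▸ hy)

theorem avoids_Delta_subset_zigzag (n : ℕ) :
    {w : List (Fin 3) | w.length = n ∧ IsReducedWord w ∧ ∀ d ∈ Delta, ¬ d <:+: w} ⊆
      ↑(insert [] ((univ ×ˢ (range 4 ∪ (range 4).image (n - 1 - ·))).image
        fun p : Fin 3 × ℕ => zigzag p.1 p.2 (n - 1 - p.2))) := by
  rintro (_ | ⟨x, t⟩) ⟨hlen, hred, havoid⟩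
  · simp
  obtain ⟨i, j, hij, hw⟩ := eq_zigzag_of_avoids_Delta hred havoid
  have hn : i + j + 1 = n := by rw [← hlen, hw, length_zigzag]
  refine mem_insert_of_mem (mem_image.2 ⟨(x, i), ?_, by simp [hw, ← hn]⟩)
  simp only [mem_product, mem_univ, mem_union, mem_range, mem_image, true_and]
  exact hij.imp_right fun hj => ⟨j, hj, by omega⟩

/-- For each `n`, there are at most `30` reduced words of length `n` over `{a,b,c}`
containing no subword from `Δ`. -/
theorem reduced_words_avoiding_Delta (n : ℕ) :
    Set.ncard {w : List (Fin 3) | w.length = n ∧ IsReducedWord w ∧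
      ∀ d ∈ Delta, ¬ d <:+: w} ≤ 30 := by
  calc _ ≤ _ := Set.ncard_le_ncard (avoids_Delta_subset_zigzag n) (Finset.finite_toSet _)
    _ ≤ 3 * (4 + 4) + 1 := by
      rw [Set.ncard_coe_finset]
      refine (card_insert_le _ _).trans (Nat.add_le_add_right (card_image_le.trans ?_) 1)
      rw [card_product, card_univ, Fintype.card_fin]
      exact Nat.mul_le_mul_left 3 <| (card_union_le _ _).trans <|
        Nat.add_le_add (card_range 4).le (card_image_le.trans (card_range 4).le)
    _ ≤ 30 := by norm_num
end

section
/- Define Λ_1 = 2 and for each n let Λ_{n+1} = Λ_n^{1-η_n} where η_n ∈ (0,1) is the unique solution of Λ_n^{1-η} = 30^η / (η^η (1-η)^{1-η}). Then the sequence (Λ_n) is strictly decreasing, bounded below by 1, and converges to 1. -/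
/-!
Since `Λ_n > 1` and `1 - η_n < 1`, the sequence decreases, so `x_n := log Λ_n` decreases to a
limit `ℓ ≥ 0`. Taking logarithms in the defining equation gives
`x_{n+1} = η_n log 30 + H(η_n)` with `H` the binary entropy, while `x_{n+1} = (1 - η_n) x_n`.
If `ℓ > 0`, the second relation forces `η_n = (x_n - x_{n+1}) / x_n → 0`, and then the first one
forces `x_{n+1} → H(0) = 0`, a contradiction.
-/

open Filter Real Topology

theorem Real.log_rpow_div_rpow_mul_rpow {a η : ℝ} (ha : 0 < a) (hη : η ∈ Set.Ioo (0 : ℝ) 1) :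
    log (a ^ η / (η ^ η * (1 - η) ^ (1 - η))) = η * log a + binEntropy η := by
  have hη₀ : 0 < η := hη.1
  have hη₁ : 0 < 1 - η := sub_pos.2 hη.2
  rw [log_div (by positivity) (by positivity), log_mul (by positivity) (by positivity),
    log_rpow ha, log_rpow hη₀, log_rpow hη₁, binEntropy, log_inv, log_inv]
  ring

theorem tendsto_zero_of_succ_eq_one_sub_mul {x η : ℕ → ℝ} {g : ℝ → ℝ} (hx : ∀ n, 0 < x n)
    (hη : ∀ n, 0 ≤ η n) (hstep : ∀ n, x (n + 1) = (1 - η n) * x n)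
    (hg : ∀ n, x (n + 1) = g (η n)) (hg₀ : Tendsto g (𝓝 0) (𝓝 0)) :
    Tendsto x atTop (𝓝 0) := by
  have hanti : Antitone x := antitone_nat_of_succ_le fun n => by
    rw [hstep]; nlinarith [hx n, hη n]
  have hconv : Tendsto x atTop (𝓝 (⨅ n, x n)) :=
    tendsto_atTop_ciInf hanti ⟨0, by rintro _ ⟨n, rfl⟩; exact (hx n).le⟩
  set ℓ := ⨅ n, x n
  have hshift : Tendsto (fun n => x (n + 1)) atTop (𝓝 ℓ) :=
    hconv.comp (tendsto_add_atTop_nat 1)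
  suffices hℓ : ℓ = 0 by rwa [hℓ] at hconv
  by_contra hℓ
  have hgap : Tendsto (fun n => (x n - x (n + 1)) / x n) atTop (𝓝 0) := by
    have := (hconv.sub hshift).div hconv hℓ
    rwa [sub_self, zero_div] at this
  have hη_lim : Tendsto η atTop (𝓝 0) := hgap.congr fun n => by
    rw [hstep]; field_simp [(hx n).ne']; ring
  exact hℓ (tendsto_nhds_unique hshift ((hg₀.comp hη_lim).congr fun n => (hg n).symm))

theorem one_lt_of_succ_eq_rpow {Λ η : ℕ → ℝ} (h₀ : 1 < Λ 0) (hη : ∀ n, η n < 1)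
    (hrec : ∀ n, Λ (n + 1) = Λ n ^ (1 - η n)) (n : ℕ) : 1 < Λ n := by
  induction n with
  | zero => exact h₀
  | succ n ih => rw [hrec]; exact one_lt_rpow ih (sub_pos.2 (hη n))

theorem strictAnti_of_succ_eq_rpow {Λ η : ℕ → ℝ} (hΛ : ∀ n, 1 < Λ n) (hη : ∀ n, 0 < η n)
    (hrec : ∀ n, Λ (n + 1) = Λ n ^ (1 - η n)) : StrictAnti Λ :=
  strictAnti_nat_of_succ_lt fun n => by
    simpa [hrec] using rpow_lt_rpow_of_exponent_lt (hΛ n) (by linarith [hη n] : 1 - η n < 1)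

/-- The recursively defined sequence `Λ_{n+1} = Λ_n^{1-η_n}` (with `Λ_0 = 2` and `η_n` the
unique solution of `Λ_n^{1-η} = 30^η/(η^η (1-η)^{1-η})` in `(0,1)`) is strictly decreasing,
bounded below by `1`, and converges to `1`. -/
theorem Lambda_sequence_tendsto_one (Λ η : ℕ → ℝ)
    (h0 : Λ 0 = 2)
    (hη : ∀ n, η n ∈ Set.Ioo (0 : ℝ) 1)
    (heq : ∀ n, Λ n ^ (1 - η n) = (30 : ℝ) ^ η n / (η n ^ η n * (1 - η n) ^ (1 - η n)))
    (hrec : ∀ n, Λ (n + 1) = Λ n ^ (1 - η n)) :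
    StrictAnti Λ ∧ (∀ n, 1 ≤ Λ n) ∧ Tendsto Λ atTop (nhds 1) := by
  have hΛ : ∀ n, 1 < Λ n :=
    one_lt_of_succ_eq_rpow (by norm_num [h0]) (fun n => (hη n).2) hrec
  have hlog : Tendsto (fun n => log (Λ n)) atTop (𝓝 0) := by
    refine tendsto_zero_of_succ_eq_one_sub_mul (g := fun t => t * log 30 + binEntropy t)
      (fun n => log_pos (hΛ n)) (fun n => (hη n).1.le)
      (fun n => by rw [hrec, log_rpow (by linarith [hΛ n])])
      (fun n => by rw [hrec, heq, log_rpow_div_rpow_mul_rpow (by norm_num) (hη n)]) ?_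
    have hcont : Continuous fun t : ℝ => t * log 30 + binEntropy t := by fun_prop
    simpa using hcont.tendsto 0
  refine ⟨strictAnti_of_succ_eq_rpow hΛ (fun n => (hη n).1) hrec, fun n => (hΛ n).le, ?_⟩
  have hexp := (continuous_exp.tendsto 0).comp hlog
  rw [exp_zero] at hexp
  exact hexp.congr fun n => exp_log (zero_lt_one.trans (hΛ n))
end

section
/- Let A be a group acting faithfully and 2-transitively on a finite set P, with A perfect. Let W be a group of permutations of the set P* of finite sequences over P containing the 'rooted' copy of A (acting on the first letter) and the 'directed' copy of an element ā for each a ∈ A defined recursively by ā = ⟨ā, a, 1, …, 1⟩ (acting as ā on sequences beginning with point 1 and as a on the second letter of sequences beginning with point 2). Then W contains, for each coordinate p ∈ P and each a ∈ A, the element acting as a on the subtree below p and trivially elsewhere; consequently W ≅ W ≀ A (the permutational wreath product {f : P → W} ⋊ A). -/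
section Machinery

set_option linter.unusedSectionVars false

variable {A : Type*} [Group A] {P : Type*} [DecidableEq P] [MulAction A P]

/-- The rooted action of `a` on finite sequences: `a` acts on the first letter. -/
def rootedFun (a : A) : List P → List P
  | [] => []
  | p :: l => (a • p) :: l

lemma rootedFun_leftInv (a : A) :
    Function.LeftInverse (rootedFun (P := P) a⁻¹) (rootedFun a) := by
  intro l; cases l with
  | nil => rfl
  | cons p l => simp [rootedFun]

/-- The rooted copy of `a` as a permutation of `P*`. -/
def rootedPerm (a : A) : Equiv.Perm (List P) :=
  ⟨rootedFun a, rootedFun a⁻¹, rootedFun_leftInv a, by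
    have h := rootedFun_leftInv (P := P) a⁻¹; rw [inv_inv] at h; exact h⟩

/-- The directed copy `ā = ⟨ā, a, 1, …, 1⟩` (with respect to designated points `p₁, p₂`):
it recurses along `p₁` and acts as the rooted `a` below `p₂`. -/
def dirFun (p₁ p₂ : P) (a : A) : List P → List P
  | [] => []
  | p :: l =>
    if p = p₁ then p :: dirFun p₁ p₂ a l
    else if p = p₂ then p :: rootedFun a l
    else p :: l

lemma dirFun_leftInv (p₁ p₂ : P) (a : A) :
    Function.LeftInverse (dirFun p₁ p₂ a⁻¹) (dirFun p₁ p₂ a) := by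
  intro l
  induction l with
  | nil => rfl
  | cons p l ih =>
    by_cases h1 : p = p₁
    · simp [dirFun, h1, ih]
    · by_cases h2 : p = p₂
      · subst h2
        simp [dirFun, h1, rootedFun_leftInv a l]
      · simp [dirFun, h1, h2]

/-- The directed copy of `a` as a permutation of `P*`. -/
def dirPerm (p₁ p₂ : P) (a : A) : Equiv.Perm (List P) :=
  ⟨dirFun p₁ p₂ a, dirFun p₁ p₂ a⁻¹, dirFun_leftInv p₁ p₂ a, by
    have h := dirFun_leftInv p₁ p₂ a⁻¹; rw [inv_inv] at h; exact h⟩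

/-- The permutation acting as (the rooted copy of) `a` on the subtree below the point `p`
and trivially elsewhere. -/
def coordFun (p : P) (a : A) : List P → List P
  | [] => []
  | q :: l => if q = p then q :: rootedFun a l else q :: l

lemma coordFun_leftInv (p : P) (a : A) :
    Function.LeftInverse (coordFun p a⁻¹) (coordFun p a) := by
  intro l; cases l with
  | nil => rfl
  | cons q l =>
    by_cases h : q = p
    · simp [coordFun, h, rootedFun_leftInv a l]
    · simp [coordFun, h]

/-- `coordFun` as a permutation of `P*`. -/
def coordPerm (p : P) (a : A) : Equiv.Perm (List P) :=
  ⟨coordFun p a, coordFun p a⁻¹, coordFun_leftInv p a, by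
    have h := coordFun_leftInv p a⁻¹; rw [inv_inv] at h; exact h⟩

/-- The action of `A` on `P → W` induced by the action of `A` on `P`,
used to form the permutational wreath product `W ≀ A = (P → W) ⋊ A`. -/
def wreathAction (A : Type*) [Group A] (P : Type*) [MulAction A P]
    (W : Type*) [Group W] : A →* MulAut (P → W) where
  toFun a :=
    { toFun := fun f p => f (a⁻¹ • p)
      invFun := fun f p => f (a • p)
      left_inv := fun f => by funext p; simp
      right_inv := fun f => by funext p; simp
      map_mul' := fun f g => rfl }
  map_one' := by ext f p; simp
  map_mul' a b := by ext f p; simp [mul_smul]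

end Machinery


section WilsonAux

variable {A : Type*} [Group A] {P : Type*} [DecidableEq P] [MulAction A P]

@[simp] lemma rootedPerm_nil (a : A) : rootedPerm a ([] : List P) = [] := rfl
@[simp] lemma rootedPerm_cons (a : A) (q : P) (l : List P) :
    rootedPerm a (q :: l) = (a • q) :: l := rfl
@[simp] lemma dirPerm_nil (p₁ p₂ : P) (a : A) : dirPerm p₁ p₂ a ([] : List P) = [] := rfl
lemma dirPerm_cons (p₁ p₂ : P) (a : A) (q : P) (l : List P) :
    dirPerm p₁ p₂ a (q :: l) =
      if q = p₁ then q :: dirPerm p₁ p₂ a l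
      else if q = p₂ then q :: rootedPerm a l else q :: l := rfl

/-- The rooted copy as a monoid hom. -/
def wdRootedHom (A : Type*) [Group A] (P : Type*) [DecidableEq P] [MulAction A P] :
    A →* Equiv.Perm (List P) where
  toFun := rootedPerm
  map_one' := by ext l; cases l <;> simp
  map_mul' a b := by ext l; cases l <;> simp [mul_smul]

@[simp] lemma rootedPerm_one : rootedPerm (1 : A) = (1 : Equiv.Perm (List P)) :=
  map_one (wdRootedHom A P)

lemma rootedPerm_mul (a b : A) :
    rootedPerm (a * b) = rootedPerm (P := P) a * rootedPerm b := map_mul (wdRootedHom A P) a b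

lemma rootedPerm_inv (a : A) :
    (rootedPerm (P := P) a)⁻¹ = rootedPerm a⁻¹ := (map_inv (wdRootedHom A P) a).symm

/-- The permutation acting below the vertex `p`. -/
def wdSubFun (p : P) (g : List P → List P) : List P → List P
  | [] => []
  | q :: l => if q = p then q :: g l else q :: l

lemma wdSubFun_leftInv (p : P) (g : Equiv.Perm (List P)) :
    Function.LeftInverse (wdSubFun p ⇑g.symm) (wdSubFun p ⇑g) := by
  intro l; cases l with
  | nil => rfl
  | cons q l => by_cases h : q = p <;> simp [wdSubFun, h]

/-- The embedding of `Perm P*` as the permutations of the subtree below `p`. -/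
def wdSub (p : P) : Equiv.Perm (List P) →* Equiv.Perm (List P) where
  toFun g := ⟨wdSubFun p ⇑g, wdSubFun p ⇑g.symm, wdSubFun_leftInv p g, by
    exact wdSubFun_leftInv p g.symm⟩
  map_one' := by ext l; cases l <;> simp [wdSubFun]
  map_mul' g h := by
    ext l; cases l with
    | nil => rfl
    | cons q l => by_cases hq : q = p <;> simp [wdSubFun, hq]

@[simp] lemma wdSub_nil (p : P) (g : Equiv.Perm (List P)) : wdSub p g ([] : List P) = [] := rfl
lemma wdSub_cons (p : P) (g : Equiv.Perm (List P)) (q : P) (l : List P) :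
    wdSub p g (q :: l) = if q = p then q :: g l else q :: l := rfl

lemma coordPerm_eq (p : P) (a : A) : coordPerm p a = wdSub p (rootedPerm a) := by
  ext l; cases l with
  | nil => rfl
  | cons q l => rfl

lemma wdSub_commute {p q : P} (h : p ≠ q) (g g' : Equiv.Perm (List P)) :
    Commute (wdSub p g) (wdSub q g') := by
  unfold Commute SemiconjBy
  ext l; cases l with
  | nil => rfl
  | cons r l =>
    simp only [Equiv.Perm.mul_apply, wdSub_cons]
    by_cases h1 : r = p <;> by_cases h2 : r = q
    · exact absurd (h1 ▸ h2) h
    · simp [wdSub_cons, h1, h2, h, h.symm]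
    · simp [wdSub_cons, h1, h2, h, h.symm]
    · simp [wdSub_cons, h1, h2, h, h.symm]

lemma rooted_conj_wdSub (c : A) (p : P) (g : Equiv.Perm (List P)) :
    rootedPerm c * wdSub p g * (rootedPerm c)⁻¹ = wdSub (c • p) g := by
  rw [rootedPerm_inv]
  ext l; cases l with
  | nil => rfl
  | cons q l =>
    simp only [Equiv.Perm.mul_apply, rootedPerm_cons, wdSub_cons]
    by_cases hq : q = c • p
    · simp [hq, inv_smul_smul, smul_inv_smul]
    · have h2 : c⁻¹ • q ≠ p := fun h => hq (by rw [← h, smul_inv_smul])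
      simp [hq, h2, smul_inv_smul]

lemma dirPerm_decomp {p₁ p₂ : P} (hp : p₁ ≠ p₂) (a : A) :
    dirPerm p₁ p₂ a = wdSub p₁ (dirPerm p₁ p₂ a) * wdSub p₂ (rootedPerm a) := by
  ext l; cases l with
  | nil => rfl
  | cons q l =>
    simp only [Equiv.Perm.mul_apply, wdSub_cons, dirPerm_cons]
    by_cases h1 : q = p₁
    · have h2 : q ≠ p₂ := h1 ▸ hp
      simp [wdSub_cons, h1, h2, hp]
    · by_cases h2 : q = p₂ <;> simp [wdSub_cons, h1, h2, hp, hp.symm]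

end WilsonAux

section WilsonPsi

open scoped commutatorElement

variable {A : Type*} [Group A] {P : Type*} [DecidableEq P] [MulAction A P]

/-- Simultaneous action below all first-level vertices. -/
def wdPsiFun (f : P → Equiv.Perm (List P)) : List P → List P
  | [] => []
  | q :: l => q :: f q l

lemma wdPsiFun_leftInv (f : P → Equiv.Perm (List P)) :
    Function.LeftInverse (wdPsiFun fun p => (f p)⁻¹) (wdPsiFun f) := by
  intro l; cases l with
  | nil => rfl
  | cons q l => simp [wdPsiFun]

/-- `wdPsi f` acts below each first-level vertex `p` as `f p`. -/
def wdPsi (P : Type*) [DecidableEq P] : (P → Equiv.Perm (List P)) →* Equiv.Perm (List P) where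
  toFun f := ⟨wdPsiFun f, wdPsiFun (fun p => (f p)⁻¹), wdPsiFun_leftInv f, by
    have := wdPsiFun_leftInv (fun p => (f p)⁻¹)
    simp only [inv_inv] at this; exact this⟩
  map_one' := by ext l; cases l <;> simp [wdPsiFun]
  map_mul' f g := by
    ext l; cases l with
    | nil => rfl
    | cons q l => simp [wdPsiFun]

@[simp] lemma wdPsi_nil (f : P → Equiv.Perm (List P)) : wdPsi P f ([] : List P) = [] := rfl
@[simp] lemma wdPsi_cons (f : P → Equiv.Perm (List P)) (q : P) (l : List P) :
    wdPsi P f (q :: l) = q :: f q l := rfl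

lemma wdPsi_mulSingle (p : P) (g : Equiv.Perm (List P)) :
    wdPsi P (Pi.mulSingle p g) = wdSub p g := by
  ext l; cases l with
  | nil => rfl
  | cons q l =>
    simp only [wdPsi_cons, wdSub_cons, Pi.mulSingle_apply]
    by_cases h : q = p <;> simp [h]

lemma wdPsi_mem [Fintype P] (W : Subgroup (Equiv.Perm (List P)))
    (f : P → Equiv.Perm (List P)) (hf : ∀ p, wdSub p (f p) ∈ W) : wdPsi P f ∈ W := by
  have h := Finset.map_noncommProd Finset.univ (fun i => Pi.mulSingle i (f i))
    (fun i _ j _ _ => Pi.mulSingle_apply_commute f i j) (wdPsi P)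
  rw [Finset.noncommProd_mulSingle f] at h
  rw [h]
  exact Subgroup.noncommProd_mem _ _ (fun p _ => by rw [wdPsi_mulSingle]; exact hf p)

/-- abstract commutator collapse -/
lemma wd_commutator_aux {G : Type*} [Group G] {u₁ v₁ u₂ v₂ : G}
    (h12 : Commute u₁ u₂) (h1v1 : Commute u₁ v₁) (h1v2 : Commute u₁ v₂)
    (h2v1 : Commute u₂ v₁) (h2v2 : Commute u₂ v₂) :
    ⁅u₁ * v₁, u₂ * v₂⁆ = ⁅v₁, v₂⁆ := by
  have k1 : Commute u₁ (v₁ * u₂ * v₂ * v₁⁻¹) :=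
    ((h1v1.mul_right h12).mul_right h1v2).mul_right h1v1.inv_right
  have k2 : Commute u₂ (v₂ * v₁⁻¹ * v₂⁻¹) :=
    (h2v2.mul_right h2v1.inv_right).mul_right h2v2.inv_right
  calc ⁅u₁ * v₁, u₂ * v₂⁆
      = u₁ * (v₁ * u₂ * v₂ * v₁⁻¹) * u₁⁻¹ * (v₂⁻¹ * u₂⁻¹) := by
        rw [commutatorElement_def]; group
    _ = (v₁ * u₂ * v₂ * v₁⁻¹) * (v₂⁻¹ * u₂⁻¹) := by rw [k1.eq]; group
    _ = v₁ * (u₂ * (v₂ * v₁⁻¹ * v₂⁻¹)) * u₂⁻¹ := by group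
    _ = v₁ * ((v₂ * v₁⁻¹ * v₂⁻¹) * u₂) * u₂⁻¹ := by rw [k2.eq]
    _ = ⁅v₁, v₂⁆ := by rw [commutatorElement_def]; group

/-- Part 1 of Wilson's decomposition. -/
lemma wd_coord_mem {A : Type*} [Group A] {P : Type*} [Fintype P] [DecidableEq P]
    [MulAction A P] [FaithfulSMul A P]
    (h2trans : ∀ p q r s : P, p ≠ q → r ≠ s → ∃ a : A, a • p = r ∧ a • q = s)
    (hperf : commutator A = ⊤)
    (p₁ p₂ : P) (hp : p₁ ≠ p₂)
    (W : Subgroup (Equiv.Perm (List P)))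
    (hW : W = Subgroup.closure
      (Set.range (rootedPerm : A → Equiv.Perm (List P)) ∪
        Set.range (dirPerm p₁ p₂ : A → Equiv.Perm (List P)))) :
    ∀ (p : P) (a : A), coordPerm p a ∈ W := by
  have hrooted : ∀ a : A, rootedPerm (P := P) a ∈ W := fun a =>
    hW ▸ Subgroup.subset_closure (Or.inl ⟨a, rfl⟩)
  have hdir : ∀ a : A, dirPerm p₁ p₂ a ∈ W := fun a =>
    hW ▸ Subgroup.subset_closure (Or.inr ⟨a, rfl⟩)
  have hD : ∀ q₁ q₂ : P, q₁ ≠ q₂ → ∀ a : A,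
      wdSub q₁ (dirPerm p₁ p₂ a) * wdSub q₂ (rootedPerm a) ∈ W := by
    intro q₁ q₂ hq a
    obtain ⟨c, hc1, hc2⟩ := h2trans p₁ p₂ q₁ q₂ hp hq
    have hmem : rootedPerm c * dirPerm p₁ p₂ a * (rootedPerm c)⁻¹ ∈ W :=
      W.mul_mem (W.mul_mem (hrooted c) (hdir a)) (W.inv_mem (hrooted c))
    have heq : rootedPerm c * dirPerm p₁ p₂ a * (rootedPerm c)⁻¹ =
        wdSub q₁ (dirPerm p₁ p₂ a) * wdSub q₂ (rootedPerm a) := by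
      conv_lhs => rw [dirPerm_decomp hp a]
      calc rootedPerm c * (wdSub p₁ (dirPerm p₁ p₂ a) * wdSub p₂ (rootedPerm a)) *
            (rootedPerm c)⁻¹
          = (rootedPerm c * wdSub p₁ (dirPerm p₁ p₂ a) * (rootedPerm c)⁻¹) *
            (rootedPerm c * wdSub p₂ (rootedPerm a) * (rootedPerm c)⁻¹) := by group
        _ = _ := by rw [rooted_conj_wdSub, rooted_conj_wdSub, hc1, hc2]
    exact heq ▸ hmem
  by_cases h3 : ∃ q : P, q ≠ p₁ ∧ q ≠ p₂
  · obtain ⟨q₀, hq1, hq2⟩ := h3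
    intro p a
    obtain ⟨r₁, r₂, hr12, hr1p, hr2p⟩ : ∃ r₁ r₂ : P, r₁ ≠ r₂ ∧ r₁ ≠ p ∧ r₂ ≠ p := by
      by_cases h1 : p = p₁
      · subst h1
        exact ⟨p₂, q₀, fun h => hq2 h.symm, fun h => hp h.symm, hq1⟩
      · by_cases h2 : p = p₂
        · subst h2
          exact ⟨p₁, q₀, fun h => hq1 h.symm, hp, hq2⟩
        · exact ⟨p₁, p₂, hp, fun h => h1 h.symm, fun h => h2 h.symm⟩
    have hcomm : ∀ x y : A, coordPerm p ⁅x, y⁆ ∈ W := by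
      intro x y
      have hkey : coordPerm p ⁅x, y⁆ =
          ⁅wdSub r₁ (dirPerm p₁ p₂ x) * wdSub p (rootedPerm x),
            wdSub r₂ (dirPerm p₁ p₂ y) * wdSub p (rootedPerm y)⁆ := by
        rw [wd_commutator_aux (wdSub_commute hr12 _ _) (wdSub_commute hr1p _ _)
          (wdSub_commute hr1p _ _) (wdSub_commute hr2p _ _) (wdSub_commute hr2p _ _)]
        rw [coordPerm_eq, ← map_commutatorElement (wdSub p)]
        congr 1
        exact map_commutatorElement (wdRootedHom A P) x y
      rw [hkey, commutatorElement_def]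
      exact W.mul_mem (W.mul_mem (W.mul_mem (hD r₁ p hr1p x) (hD r₂ p hr2p y))
        (W.inv_mem (hD r₁ p hr1p x))) (W.inv_mem (hD r₂ p hr2p y))
    have hle : commutator A ≤ Subgroup.comap ((wdSub p).comp (wdRootedHom A P)) W := by
      rw [commutator_def]
      refine Subgroup.commutator_le.2 fun x _ y _ => ?_
      rw [Subgroup.mem_comap]
      have : ((wdSub p).comp (wdRootedHom A P)) ⁅x, y⁆ = coordPerm p ⁅x, y⁆ := by
        rw [coordPerm_eq]; rfl
      rw [this]
      exact hcomm x y
    have : a ∈ commutator A := hperf ▸ Subgroup.mem_top a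
    have := hle this
    rw [Subgroup.mem_comap] at this
    rw [coordPerm_eq]
    exact this
  · push_neg at h3
    have htwo : ∀ q : P, q = p₁ ∨ q = p₂ := fun q => or_iff_not_imp_left.2 (h3 q)
    have hone : ∀ a : A, a = 1 := by
      have hcase : ∀ c : A, (c • p₁ = p₁ ∧ c • p₂ = p₂) ∨ (c • p₁ = p₂ ∧ c • p₂ = p₁) := by
        intro c
        rcases htwo (c • p₁) with h1 | h1
        · refine Or.inl ⟨h1, ?_⟩
          rcases htwo (c • p₂) with h2 | h2
          · exact absurd (smul_left_cancel c (h2.trans h1.symm)) (Ne.symm hp)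
          · exact h2
        · refine Or.inr ⟨h1, ?_⟩
          rcases htwo (c • p₂) with h2 | h2
          · exact h2
          · exact absurd (smul_left_cancel c (h2.trans h1.symm)) (Ne.symm hp)
      have hAB : ∀ a b : A, a * b = b * a := by
        intro a b
        apply eq_of_smul_eq_smul (α := P)
        intro q
        rcases hcase a with ⟨ha1, ha2⟩ | ⟨ha1, ha2⟩ <;>
          rcases hcase b with ⟨hb1, hb2⟩ | ⟨hb1, hb2⟩ <;>
          rcases htwo q with rfl | rfl <;>
          simp [mul_smul, ha1, ha2, hb1, hb2]
      have hbot : commutator A ≤ ⊥ := by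
        rw [commutator_def]
        refine Subgroup.commutator_le.2 fun x _ y _ => ?_
        rw [Subgroup.mem_bot, commutatorElement_eq_one_iff_mul_comm]
        exact hAB x y
      intro a
      have := hbot (hperf ▸ Subgroup.mem_top a)
      rwa [Subgroup.mem_bot] at this
    intro p a
    rw [hone a, coordPerm_eq, rootedPerm_one, map_one]
    exact W.one_mem

end WilsonPsi

/-- Wilson's decomposition: if `A` acts faithfully and `2`-transitively on a finite set `P` and
`A` is perfect, then the group `W` generated by the rooted copy of `A` and the directed copy
`Ā` contains every coordinate copy of `A`, and `W ≅ W ≀ A`. -/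
theorem wilson_decomposition {A : Type*} [Group A] {P : Type*} [Fintype P] [DecidableEq P]
    [MulAction A P] [FaithfulSMul A P]
    (h2trans : ∀ p q r s : P, p ≠ q → r ≠ s → ∃ a : A, a • p = r ∧ a • q = s)
    (hperf : commutator A = ⊤)
    (p₁ p₂ : P) (hp : p₁ ≠ p₂)
    (W : Subgroup (Equiv.Perm (List P)))
    (hW : W = Subgroup.closure
      (Set.range (rootedPerm : A → Equiv.Perm (List P)) ∪
        Set.range (dirPerm p₁ p₂ : A → Equiv.Perm (List P)))) :
    (∀ (p : P) (a : A), coordPerm p a ∈ W) ∧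
      Nonempty (W ≃* (P → W) ⋊[wreathAction A P W] A) := by
  have key : ∀ (p : P) (a : A), coordPerm p a ∈ W :=
    wd_coord_mem h2trans hperf p₁ p₂ hp W hW
  refine ⟨key, ?_⟩
  have hrooted : ∀ a : A, rootedPerm (P := P) a ∈ W := fun a =>
    hW ▸ Subgroup.subset_closure (Or.inl ⟨a, rfl⟩)
  have hdir : ∀ a : A, dirPerm p₁ p₂ a ∈ W := fun a =>
    hW ▸ Subgroup.subset_closure (Or.inr ⟨a, rfl⟩)
  have htrans : ∀ p q : P, ∃ c : A, c • p = q := by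
    intro p q
    by_cases h : p = q
    · exact ⟨1, by simp [h]⟩
    · obtain ⟨r, hr⟩ : ∃ r : P, r ≠ p := by
        by_cases h1 : p = p₁
        · exact ⟨p₂, fun hh => hp (h1 ▸ hh).symm⟩
        · exact ⟨p₁, fun hh => h1 (hh.symm)⟩
      obtain ⟨s, hs⟩ : ∃ s : P, s ≠ q := by
        by_cases h1 : q = p₁
        · exact ⟨p₂, fun hh => hp (h1 ▸ hh).symm⟩
        · exact ⟨p₁, fun hh => h1 (hh.symm)⟩
      obtain ⟨c, hc, -⟩ := h2trans p r q s (Ne.symm hr) (Ne.symm hs)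
      exact ⟨c, hc⟩
  -- wdSub maps W into itself
  have hsubW : ∀ (p : P) (g : Equiv.Perm (List P)), g ∈ W → wdSub p g ∈ W := by
    intro p g hg
    rw [hW] at hg
    have hS : (Set.range (rootedPerm : A → Equiv.Perm (List P)) ∪
        Set.range (dirPerm p₁ p₂ : A → Equiv.Perm (List P))) ⊆
        ↑(Subgroup.comap (wdSub p) W) := by
      rintro x (⟨a, rfl⟩ | ⟨a, rfl⟩)
      · rw [SetLike.mem_coe, Subgroup.mem_comap, ← coordPerm_eq]
        exact key p a
      · rw [SetLike.mem_coe, Subgroup.mem_comap]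
        have h1 : wdSub p₁ (dirPerm p₁ p₂ a) ∈ W := by
          have heq : wdSub p₁ (dirPerm p₁ p₂ a) =
              dirPerm p₁ p₂ a * (wdSub p₂ (rootedPerm a))⁻¹ :=
            eq_mul_inv_of_mul_eq (dirPerm_decomp hp a).symm
          rw [heq]
          exact W.mul_mem (hdir a) (W.inv_mem (by rw [← coordPerm_eq]; exact key p₂ a))
        obtain ⟨c, hc⟩ := htrans p₁ p
        have heq2 : wdSub p (dirPerm p₁ p₂ a) =
            rootedPerm c * wdSub p₁ (dirPerm p₁ p₂ a) * (rootedPerm c)⁻¹ := by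
          rw [rooted_conj_wdSub, hc]
        rw [heq2]
        exact W.mul_mem (W.mul_mem (hrooted c) h1) (W.inv_mem (hrooted c))
    exact Subgroup.mem_comap.1 ((Subgroup.closure_le _).2 hS hg)
  -- the homomorphism from the wreath product
  let f₁ : (P → W) →* Equiv.Perm (List P) :=
    { toFun := fun f => wdPsi P (fun p => (f p : Equiv.Perm (List P)))
      map_one' := map_one (wdPsi P)
      map_mul' := fun f g => map_mul (wdPsi P) _ _ }
  have hcompat : ∀ a : A,
      f₁.comp ((wreathAction A P W) a).toMonoidHom =
        (MulAut.conj ((wdRootedHom A P) a)).toMonoidHom.comp f₁ := by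
    intro a
    refine MonoidHom.ext fun f => Equiv.ext fun l => ?_
    simp only [MonoidHom.comp_apply, MulEquiv.coe_toMonoidHom, MulAut.conj_apply, f₁,
      MonoidHom.coe_mk, OneHom.coe_mk, Equiv.Perm.mul_apply]
    have hwa : ((wreathAction A P W) a) f = fun p => f (a⁻¹ • p) := rfl
    rw [hwa, show ((wdRootedHom A P) a)⁻¹ = rootedPerm a⁻¹ from rootedPerm_inv a,
      show (wdRootedHom A P) a = rootedPerm a from rfl]
    cases l with
    | nil => rfl
    | cons q l => simp [smul_inv_smul]
  let Φ := SemidirectProduct.lift f₁ (wdRootedHom A P) hcompat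
  have hmem : ∀ x : (P → W) ⋊[wreathAction A P W] A, Φ x ∈ W := by
    intro x
    rw [← SemidirectProduct.inl_left_mul_inr_right x, map_mul,
      SemidirectProduct.lift_inl, SemidirectProduct.lift_inr]
    exact W.mul_mem (wdPsi_mem W _ fun p => hsubW p _ (x.left p).2) (hrooted _)
  let Φ' := Φ.codRestrict W hmem
  have hinj : Function.Injective Φ' := by
    rw [injective_iff_map_eq_one]
    rintro ⟨f, a⟩ hx
    have hx1 : Φ ⟨f, a⟩ = 1 := by
      have := congrArg (Subtype.val) hx
      simpa [Φ'] using this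
    have hΦ : wdPsi P (fun p => ((f p : W) : Equiv.Perm (List P))) * rootedPerm a = 1 := by
      have h0 : SemidirectProduct.inl f * SemidirectProduct.inr a =
          (⟨f, a⟩ : (P → W) ⋊[wreathAction A P W] A) :=
        SemidirectProduct.inl_left_mul_inr_right
          (⟨f, a⟩ : (P → W) ⋊[wreathAction A P W] A)
      rw [← h0, map_mul, SemidirectProduct.lift_inl, SemidirectProduct.lift_inr] at hx1
      exact hx1
    have ha : a = 1 := by
      apply eq_of_smul_eq_smul (α := P)
      intro p
      have := congrArg (fun e : Equiv.Perm (List P) => e [p]) hΦ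
      simp only [Equiv.Perm.mul_apply, Equiv.Perm.one_apply, rootedPerm_cons,
        wdPsi_cons] at this
      rw [one_smul]
      exact (List.cons.injEq _ _ _ _ ▸ this).1
    subst ha
    have hf : f = 1 := by
      funext p
      have hperm : ((f p : W) : Equiv.Perm (List P)) = 1 := by
        refine Equiv.ext fun l => ?_
        have := congrArg (fun e : Equiv.Perm (List P) => e (p :: l)) hΦ
        simp only [rootedPerm_one, mul_one, Equiv.Perm.one_apply, wdPsi_cons] at this
        simpa using (List.cons.injEq _ _ _ _ ▸ this).2
      exact Subtype.ext hperm
    rw [hf]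
    rfl
  have hrange : W ≤ Φ.range := by
    have hS : (Set.range (rootedPerm : A → Equiv.Perm (List P)) ∪
        Set.range (dirPerm p₁ p₂ : A → Equiv.Perm (List P))) ⊆ ↑Φ.range := by
      rintro x (⟨a, rfl⟩ | ⟨a, rfl⟩)
      · exact ⟨SemidirectProduct.inr a, SemidirectProduct.lift_inr _ _ _ _⟩
      · refine ⟨SemidirectProduct.inl (fun p =>
          if h1 : p = p₁ then ⟨dirPerm p₁ p₂ a, hdir a⟩
          else if h2 : p = p₂ then ⟨rootedPerm a, hrooted a⟩ else 1), ?_⟩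
        rw [SemidirectProduct.lift_inl]
        show wdPsi P _ = _
        refine Equiv.ext fun l => ?_
        cases l with
        | nil => rfl
        | cons q l =>
          rw [wdPsi_cons, dirPerm_cons]
          by_cases h1 : q = p₁
          · subst h1; simp
          · by_cases h2 : q = p₂
            · subst h2; simp [h1]
            · simp [h1, h2]
    intro g hg
    rw [hW] at hg
    exact (Subgroup.closure_le _).2 hS hg
  have hsurj : Function.Surjective Φ' := by
    rintro ⟨w, hw⟩
    obtain ⟨x, hx⟩ := hrange hw
    exact ⟨x, Subtype.ext hx⟩
  exact ⟨(MulEquiv.ofBijective Φ' ⟨hinj, hsurj⟩).symm⟩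
end
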